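/- For s, t > 0, r ≥ 2√(st), and the function f(λ, z) := λr − t(λ²/2 + zλ) − s·log((z+λ)/z) on λ, z > 0, we have sup_{λ,z>0} f(λ,z) = r√(r²−4st)/(2t) + s·log((r−√(r²−4st))/(r+√(r²−4st))), and when r = 2√(st) this supremum equals 0. -/

import Mathlib

set_option maxHeartbeats 1000000

noncomputable def phiRF (s t r x : ℝ) : ℝ := r * x - t * x ^ 2 / 2 - s * Real.log x

lemma hasDerivAt_phiRF (s t r x : ℝ) (hx : x ≠ 0) :
    HasDerivAt (phiRF s t r) (r - t * x - s / x) x := by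
  have h1 : HasDerivAt (fun x : ℝ => r * x) r x := by
    simpa using (hasDerivAt_id x).const_mul r
  have h2 : HasDerivAt (fun x : ℝ => t * x ^ 2 / 2) (t * x) x := by
    have h := ((hasDerivAt_pow 2 x).const_mul t).div_const 2
    norm_num at h
    rw [show t * x = t * (2 * x) / 2 by ring]
    exact h
  have h3 : HasDerivAt (fun x : ℝ => s * Real.log x) (s * x⁻¹) x :=
    (Real.hasDerivAt_log hx).const_mul s
  have h := (h1.sub h2).sub h3
  have he : r - t * x - s * x⁻¹ = r - t * x - s / x := by rw [div_eq_mul_inv]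
  rw [← he]
  exact h

lemma phiRF_val (s t r lam z : ℝ) (hlam : 0 < lam) (hz : 0 < z) :
    lam * r - t * (lam ^ 2 / 2 + z * lam) - s * Real.log ((z + lam) / z) =
      phiRF s t r (z + lam) - phiRF s t r z := by
  unfold phiRF
  rw [Real.log_div (by positivity) (ne_of_gt hz)]
  ring

lemma rate_key (s t r : ℝ) (hs : 0 < s) (ht : 0 < t)
    (hr : 2 * Real.sqrt (s * t) ≤ r) :
    sSup {y : ℝ | ∃ lam > 0, ∃ z > 0,
        y = lam * r - t * (lam ^ 2 / 2 + z * lam) - s * Real.log ((z + lam) / z)} =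
      r * Real.sqrt (r ^ 2 - 4 * s * t) / (2 * t) +
        s * Real.log ((r - Real.sqrt (r ^ 2 - 4 * s * t)) /
          (r + Real.sqrt (r ^ 2 - 4 * s * t))) := by
  have hst : 0 < s * t := mul_pos hs ht
  have hr0 : 0 < r := lt_of_lt_of_le (by positivity) hr
  have h4 : (2 * Real.sqrt (s * t)) ^ 2 = 4 * (s * t) := by
    rw [mul_pow, Real.sq_sqrt hst.le]; ring
  have hD : 0 ≤ r ^ 2 - 4 * s * t := by
    nlinarith [Real.sqrt_nonneg (s * t)]
  set q := Real.sqrt (r ^ 2 - 4 * s * t) with hqdef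
  have hq2 : q ^ 2 = r ^ 2 - 4 * s * t := Real.sq_sqrt hD
  have hq0 : 0 ≤ q := Real.sqrt_nonneg _
  have hqr : q < r := by nlinarith
  have h2t : (0:ℝ) < 2 * t := by linarith
  set xm := (r - q) / (2 * t) with hxmdef
  set xp := (r + q) / (2 * t) with hxpdef
  have hxm : 0 < xm := div_pos (by linarith) h2t
  have hxp : 0 < xp := div_pos (by linarith) h2t
  have hle : xm ≤ xp := by
    rw [hxmdef, hxpdef, div_le_div_iff₀ h2t h2t]; nlinarith
  set φ := phiRF s t r with hφdef
  -- key quadratic facts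
  have hsum : t * (xm + xp) = r := by
    rw [hxmdef, hxpdef]; field_simp; ring
  have hprod : t * (xm * xp) = s := by
    rw [hxmdef, hxpdef]; field_simp; nlinarith
  -- derivative of φ
  have hderiv : ∀ x : ℝ, 0 < x → deriv φ x = r - t * x - s / x := fun x hx =>
    (hasDerivAt_phiRF s t r x hx.ne').deriv
  have hcont : ∀ x : ℝ, 0 < x → ContinuousAt φ x := fun x hx =>
    (hasDerivAt_phiRF s t r x hx.ne').continuousAt
  have hdiff : ∀ x : ℝ, 0 < x → DifferentiableAt ℝ φ x := fun x hx =>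
    (hasDerivAt_phiRF s t r x hx.ne').differentiableAt
  -- monotone on [xm, xp]
  have hmono : MonotoneOn φ (Set.Icc xm xp) := by
    apply monotoneOn_of_deriv_nonneg (convex_Icc _ _)
    · exact fun x hx => (hcont x (lt_of_lt_of_le hxm hx.1)).continuousWithinAt
    · intro x hx
      rw [interior_Icc] at hx
      exact ((hdiff x (lt_trans hxm hx.1))).differentiableWithinAt
    · intro x hx
      rw [interior_Icc] at hx
      obtain ⟨hx1, hx2⟩ := hx
      have hx0 : 0 < x := lt_trans hxm hx1
      rw [hderiv x hx0]
      have key : t * x ^ 2 - r * x + s ≤ 0 := by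
        nlinarith [mul_nonneg (mul_nonneg ht.le (sub_nonneg.2 hx1.le)) (sub_nonneg.2 hx2.le)]
      have : s / x ≤ r - t * x := by
        rw [div_le_iff₀ hx0]; nlinarith
      linarith
  -- antitone on (0, xm]
  have hanti1 : AntitoneOn φ (Set.Ioc 0 xm) := by
    apply antitoneOn_of_deriv_nonpos (convex_Ioc _ _)
    · exact fun x hx => (hcont x hx.1).continuousWithinAt
    · intro x hx
      rw [interior_Ioc] at hx
      exact (hdiff x hx.1).differentiableWithinAt
    · intro x hx
      rw [interior_Ioc] at hx
      obtain ⟨hx1, hx2⟩ := hx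
      rw [hderiv x hx1]
      have key : 0 ≤ t * x ^ 2 - r * x + s := by
        nlinarith [mul_nonneg (mul_nonneg ht.le (sub_nonneg.2 hx2.le))
          (sub_nonneg.2 (le_trans hx2.le hle))]
      have : r - t * x ≤ s / x := by
        rw [le_div_iff₀ hx1]; nlinarith
      linarith
  -- antitone on [xp, ∞)
  have hanti2 : AntitoneOn φ (Set.Ici xp) := by
    apply antitoneOn_of_deriv_nonpos (convex_Ici _)
    · exact fun x hx => (hcont x (lt_of_lt_of_le hxp hx)).continuousWithinAt
    · intro x hx
      rw [interior_Ici] at hx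
      have hx' : xp < x := hx
      exact (hdiff x (lt_trans hxp hx')).differentiableWithinAt
    · intro x hx
      rw [interior_Ici] at hx
      have hx' : xp < x := hx
      have hx0 : 0 < x := lt_trans hxp hx'
      rw [hderiv x hx0]
      have key : 0 ≤ t * x ^ 2 - r * x + s := by
        nlinarith [mul_nonneg (mul_nonneg ht.le (sub_nonneg.2 (le_trans hle hx'.le)))
          (sub_nonneg.2 hx'.le)]
      have : r - t * x ≤ s / x := by
        rw [le_div_iff₀ hx0]; nlinarith
      linarith
  have hM0 : 0 ≤ φ xp - φ xm :=
    sub_nonneg.2 (hmono ⟨le_refl _, hle⟩ ⟨hle, le_refl _⟩ hle)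
  -- global upper bound
  have hub : ∀ b a : ℝ, 0 < b → b < a → φ a - φ b ≤ φ xp - φ xm := by
    intro b a hb hba
    by_cases h1 : a ≤ xm
    · have : φ a ≤ φ b :=
        hanti1 ⟨hb, le_trans hba.le h1⟩ ⟨lt_trans hb hba, h1⟩ hba.le
      linarith
    · by_cases h2 : xp ≤ b
      · have : φ a ≤ φ b := hanti2 h2 (le_trans h2 hba.le) hba.le
        linarith
      · push_neg at h1 h2
        have ha' : φ a ≤ φ xp := by
          rcases le_total a xp with h | h
          · exact hmono ⟨h1.le, h⟩ ⟨hle, le_refl _⟩ h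
          · exact hanti2 (Set.mem_Ici.2 (le_refl xp)) h h
        have hb' : φ xm ≤ φ b := by
          rcases le_total b xm with h | h
          · exact hanti1 ⟨hb, h⟩ ⟨hxm, le_refl _⟩ h
          · exact hmono ⟨le_refl _, hle⟩ ⟨h, h2.le⟩ h
        linarith
  -- value of the maximum
  have hMval : φ xp - φ xm =
      r * q / (2 * t) + s * Real.log ((r - q) / (r + q)) := by
    have hxmp : xm / xp = (r - q) / (r + q) := by
      have hrq0 : r + q ≠ 0 := by positivity
      rw [hxmdef, hxpdef]
      field_simp
    have hlog : Real.log xm - Real.log xp = Real.log ((r - q) / (r + q)) := by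
      rw [← Real.log_div hxm.ne' hxp.ne', hxmp]
    have hpoly : r * xp - t * xp ^ 2 / 2 - (r * xm - t * xm ^ 2 / 2) =
        r * q / (2 * t) := by
      rw [hxmdef, hxpdef]; field_simp; ring
    rw [hφdef]; unfold phiRF
    linear_combination hpoly + s * hlog
  -- nonemptiness
  have hne : {y : ℝ | ∃ lam > 0, ∃ z > 0,
      y = lam * r - t * (lam ^ 2 / 2 + z * lam) - s * Real.log ((z + lam) / z)}.Nonempty := by
    exact ⟨_, 1, one_pos, 1, one_pos, rfl⟩
  apply csSup_eq_of_forall_le_of_forall_lt_exists_gt hne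
  · rintro y ⟨lam, hlam, z, hz, rfl⟩
    rw [phiRF_val s t r lam z hlam hz, ← hMval] at *
    exact hub z (z + lam) hz (by linarith)
  · intro w hw
    rcases eq_or_lt_of_le hq0 with hq | hq
    · -- q = 0 : boundary case, approach via continuity
      have hxmxp : xm = xp := by rw [hxmdef, hxpdef, ← hq]; ring_nf
      have hMz : r * q / (2 * t) + s * Real.log ((r - q) / (r + q)) = 0 := by
        rw [← hMval, hxmxp]; ring
      rw [hMz] at hw
      have ht1 : Filter.Tendsto (fun lam : ℝ => φ (xm + lam)) (nhds 0) (nhds (φ xm)) := by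
        have hc : ContinuousAt φ xm := hcont xm hxm
        have hadd : Filter.Tendsto (fun lam : ℝ => xm + lam) (nhds 0) (nhds xm) := by
          exact (continuous_add_left xm).tendsto' 0 xm (by simp)
        exact hc.tendsto.comp hadd
      have ht2 : Filter.Tendsto (fun lam : ℝ => φ (xm + lam) - φ xm) (nhds 0) (nhds 0) := by
        simpa using ht1.sub_const (φ xm)
      have ht3 : Filter.Tendsto (fun lam : ℝ => φ (xm + lam) - φ xm)
          (nhdsWithin 0 (Set.Ioi 0)) (nhds 0) := ht2.mono_left nhdsWithin_le_nhds
      have hev : ∀ᶠ lam in nhdsWithin (0:ℝ) (Set.Ioi 0),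
          w < φ (xm + lam) - φ xm := ht3.eventually (eventually_gt_nhds hw)
      obtain ⟨lam, hlam1, hlam2⟩ := (hev.and self_mem_nhdsWithin).exists
      refine ⟨_, ⟨lam, hlam2, xm, hxm, rfl⟩, ?_⟩
      rw [phiRF_val s t r lam xm hlam2 hxm]
      exact hlam1
    · -- q > 0 : maximum attained
      refine ⟨_, ⟨q / t, div_pos hq ht, xm, hxm, rfl⟩, ?_⟩
      rw [phiRF_val s t r (q / t) xm (div_pos hq ht) hxm]
      have hx : xm + q / t = xp := by
        rw [hxmdef, hxpdef]; field_simp; ring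
      rw [hx, hMval]
      exact hw

theorem rate_function_legendre_value_and_boundary (s t r : ℝ) (hs : 0 < s) (ht : 0 < t)
    (hr : 2 * Real.sqrt (s * t) ≤ r) :
    sSup {y : ℝ | ∃ lam > 0, ∃ z > 0,
        y = lam * r - t * (lam ^ 2 / 2 + z * lam) - s * Real.log ((z + lam) / z)} =
      r * Real.sqrt (r ^ 2 - 4 * s * t) / (2 * t) +
        s * Real.log ((r - Real.sqrt (r ^ 2 - 4 * s * t)) /
          (r + Real.sqrt (r ^ 2 - 4 * s * t))) ∧
    (r = 2 * Real.sqrt (s * t) →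
      sSup {y : ℝ | ∃ lam > 0, ∃ z > 0,
        y = lam * r - t * (lam ^ 2 / 2 + z * lam) - s * Real.log ((z + lam) / z)} = 0) := by
  have hkey := rate_key s t r hs ht hr
  refine ⟨hkey, fun h => ?_⟩
  rw [hkey]
  have hst : 0 < s * t := mul_pos hs ht
  have hr0 : 0 < r := lt_of_lt_of_le (by positivity) hr
  have hD0 : r ^ 2 - 4 * s * t = 0 := by
    rw [h, mul_pow, Real.sq_sqrt hst.le]; ring
  rw [hD0, Real.sqrt_zero]
  simp [div_self hr0.ne']
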